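/- For every integer k ≥ 2 and every permutation σ of {1,…,k}, the map h_σ : L_k^♯ → L_k^♯ induced by (i,x) ↦ (σ(i), x) (so h_σ([x]_i) = [x]_{σ(i)} for x ≠ 0 and h_σ(o_i) = o_{σ(i)}) is a well-defined homeomorphism satisfying p ∘ h_σ = p, and the assignment σ ↦ h_σ is an injective group homomorphism from the symmetric group on k letters into the group of deck transformations of p. -/

import Mathlib

/-- The gluing relation on `Fin k × ℝ`: `(i,x) ∼ (j,y)` iff `x = y` and
(`x ≠ 0` or `i = j`), i.e. all non-zero points are glued and the origins stay apart. -/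
def lineSetoid (k : ℕ) : Setoid (Fin k × ℝ) where
  r p q := p.2 = q.2 ∧ (p.2 ≠ 0 ∨ p.1 = q.1)
  iseqv := by
    constructor
    · exact fun p => ⟨rfl, Or.inr rfl⟩
    · rintro p q ⟨h1, h2⟩
      refine ⟨h1.symm, ?_⟩
      rcases h2 with h | h
      · exact Or.inl (h1 ▸ h)
      · exact Or.inr h.symm
    · rintro p q r ⟨h1, h2⟩ ⟨h3, h4⟩
      refine ⟨h1.trans h3, ?_⟩
      rcases h2 with h | h
      · exact Or.inl h
      · rcases h4 with h' | h'
        · exact Or.inl (h1.symm ▸ h')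
        · exact Or.inr (h.trans h')

/-- The line with `k` (inseparable) origins `L_k^♯`, as a quotient of `Fin k × ℝ`
equipped with the quotient topology. -/
def LineK (k : ℕ) : Type := Quotient (lineSetoid k)

instance (k : ℕ) : TopologicalSpace (LineK k) :=
  inferInstanceAs (TopologicalSpace (Quotient (lineSetoid k)))

/-- `[x]_i`, the class of the point `x` on the `i`-th copy of `ℝ`. -/
def LineK.mk (k : ℕ) (i : Fin k) (x : ℝ) : LineK k := Quotient.mk (lineSetoid k) (i, x)

/-- The `i`-th origin `o_i = [0]_i`. -/
def LineK.origin (k : ℕ) (i : Fin k) : LineK k := LineK.mk k i 0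

/-- The canonical projection `p : L_k^♯ → ℝ`, `[x]_i ↦ x`. -/
def LineK.proj (k : ℕ) : LineK k → ℝ :=
  Quotient.lift (fun p => p.2) (fun _ _ h => h.1)

/-- The group of self-homeomorphisms of `L_k^♯` under composition. -/
instance (k : ℕ) : Group (LineK k ≃ₜ LineK k) where
  mul f g := g.trans f
  one := Homeomorph.refl _
  inv f := f.symm
  mul_assoc f g h := Homeomorph.ext fun _ => rfl
  one_mul f := Homeomorph.ext fun _ => rfl
  mul_one f := Homeomorph.ext fun _ => rfl
  inv_mul_cancel f := Homeomorph.ext f.symm_apply_apply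

/-- The deck-transformation group `Deck(p)` of `p : L_k^♯ → ℝ`: the group of
homeomorphisms `h : L_k^♯ ≃ₜ L_k^♯` with `p ∘ h = p`. -/
def Deck (k : ℕ) : Subgroup (LineK k ≃ₜ LineK k) where
  carrier := {h | ∀ q, LineK.proj k (h q) = LineK.proj k q}
  one_mem' := fun _ => rfl
  mul_mem' := by
    intro a b ha hb q
    exact (ha (b q)).trans (hb q)
  inv_mem' := by
    intro a ha q
    have h := ha (a.symm q)
    simpa using h.symm

namespace LineK

variable {k : ℕ}

theorem origin_injective : Function.Injective (origin k) := fun _ _ h =>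
  (Quotient.exact h).2.resolve_left (not_not_intro rfl)

/-- `h_σ` is induced by `σ × id` on `Fin k × ℝ`, which respects the gluing relation since it
fixes the real coordinate and is injective on the indices. -/
def permHomeo (σ : Equiv.Perm (Fin k)) : LineK k ≃ₜ LineK k :=
  Homeomorph.Quotient.congr ((Equiv.toHomeomorphOfDiscrete σ).prodCongr (Homeomorph.refl ℝ))
    fun _ _ => and_congr_right' (or_congr_right σ.injective.eq_iff.symm)

@[simp]
theorem permHomeo_mk (σ : Equiv.Perm (Fin k)) (i : Fin k) (x : ℝ) :
    permHomeo σ (mk k i x) = mk k (σ i) x := rfl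

theorem proj_permHomeo (σ : Equiv.Perm (Fin k)) (q : LineK k) :
    proj k (permHomeo σ q) = proj k q :=
  Quotient.inductionOn q fun _ => rfl

def permDeck (k : ℕ) : Equiv.Perm (Fin k) →* Deck k where
  toFun σ := ⟨permHomeo σ, proj_permHomeo σ⟩
  map_one' := Subtype.ext <| Homeomorph.ext fun q => Quotient.inductionOn q fun _ => rfl
  map_mul' _ _ := Subtype.ext <| Homeomorph.ext fun q => Quotient.inductionOn q fun _ => rfl

/-- `σ` is read off from where `h_σ` sends the origins, which the gluing keeps apart. -/
theorem permDeck_injective : Function.Injective (permDeck k) := fun _ _ h =>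
  Equiv.ext fun i => origin_injective
    (congrArg (fun f : Deck k => (f : LineK k ≃ₜ LineK k) (origin k i)) h)

end LineK

theorem stmt18_general (k : ℕ) :
    ∃ Φ : Equiv.Perm (Fin k) →* Deck k,
      Function.Injective Φ ∧
      ∀ (σ : Equiv.Perm (Fin k)) (i : Fin k) (x : ℝ),
        ((Φ σ : LineK k ≃ₜ LineK k)) (LineK.mk k i x) = LineK.mk k (σ i) x :=
  ⟨LineK.permDeck k, LineK.permDeck_injective, LineK.permHomeo_mk⟩

/-- For every integer `k ≥ 2` and every permutation `σ` of
`{1,…,k}`, the map `h_σ` induced by `(i,x) ↦ (σ(i),x)` is a well-defined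
homeomorphism of `L_k^♯` with `p ∘ h_σ = p` (i.e. a deck transformation), and
`σ ↦ h_σ` is an injective group homomorphism `𝔖_k → Deck(p)`. -/
theorem stmt18 (k : ℕ) (hk : 2 ≤ k) :
    ∃ Φ : Equiv.Perm (Fin k) →* Deck k,
      Function.Injective Φ ∧
      ∀ (σ : Equiv.Perm (Fin k)) (i : Fin k) (x : ℝ),
        ((Φ σ : LineK k ≃ₜ LineK k)) (LineK.mk k i x) = LineK.mk k (σ i) x :=
  stmt18_general k
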